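/- arXiv:1909.01504 — 4 statements merged into one kernel-verified Lean document; each statement's English description precedes it below -/
import Mathlib

section
/- Let K ≥ 1, θ ∈ (0,1], Q ∈ ℝ with θ ≤ Q ≤ K, M = min(⌊Q/θ⌋, K), and θ̂ = Q/M. Then θ ≤ θ̂, and moreover M = min(⌊Q/θ̂⌋, K); that is, replacing the threshold θ by θ̂ = Q/M does not change the maximum number of arms that can be simultaneously allocated resource at least the threshold under the budget Q. -/
theorem stmt_1 (K : ℕ) (hK : 1 ≤ K) (θ Q : ℝ) (hθ0 : 0 < θ) (hθ1 : θ ≤ 1)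
    (hQl : θ ≤ Q) (hQu : Q ≤ K) (M : ℕ) (hM : M = min ⌊Q / θ⌋₊ K)
    (θhat : ℝ) (hθhat : θhat = Q / M) :
    θ ≤ θhat ∧ M = min ⌊Q / θhat⌋₊ K := by
  have hQ0 : 0 < Q := lt_of_lt_of_le hθ0 hQl
  have h1 : (1 : ℝ) ≤ Q / θ := (one_le_div hθ0).mpr hQl
  have hfl : 1 ≤ ⌊Q / θ⌋₊ := (Nat.one_le_floor_iff _).mpr (by linarith [h1])
  have hM1 : 1 ≤ M := by rw [hM]; exact le_min hfl hK
  have hMpos : (0 : ℝ) < (M : ℝ) := by exact_mod_cast hM1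
  have hMle : (M : ℝ) ≤ Q / θ := by
    have : (M : ℝ) ≤ (⌊Q / θ⌋₊ : ℝ) := by
      exact_mod_cast (hM ▸ min_le_left _ _)
    exact this.trans (Nat.floor_le (by positivity))
  have hθhat' : θ ≤ θhat := by
    rw [hθhat, le_div_iff₀ hMpos]
    nlinarith [hMle, mul_le_mul_of_nonneg_right hMle (le_of_lt hθ0),
      div_mul_cancel₀ Q (ne_of_gt hθ0)]
  refine ⟨hθhat', ?_⟩
  have : Q / θhat = (M : ℝ) := by
    rw [hθhat]
    field_simp
  rw [this, Nat.floor_natCast]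
  have hMK : M ≤ K := hM ▸ min_le_right _ _
  rw [min_eq_left hMK]
end

section
/- Let μ : Fin K → [0,1], θ ∈ (0,1], Q ≥ θ, and M = min(⌊Q/θ⌋, K). Then the minimum over feasible allocations a of ∑_i μ_i · 1[a_i < θ] equals (∑_i μ_i) minus the maximum of ∑_{i∈S} μ_i over all subsets S ⊆ Fin K with |S| ≤ M. -/
open Finset in
theorem stmt_3 (K : ℕ) (μ : Fin K → ℝ) (hμ : ∀ i, μ i ∈ Set.Icc (0:ℝ) 1)
    (θ Q : ℝ) (hθ0 : 0 < θ) (hθ1 : θ ≤ 1) (hQ : θ ≤ Q)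
    (M : ℕ) (hM : M = min ⌊Q / θ⌋₊ K) (V : ℝ)
    (hV : IsGreatest {v : ℝ | ∃ S : Finset (Fin K), S.card ≤ M ∧ v = ∑ i ∈ S, μ i} V) :
    IsLeast {L : ℝ | ∃ a : Fin K → ℝ, (∀ i, a i ∈ Set.Icc (0:ℝ) 1) ∧
        (∑ i, a i) ≤ Q ∧ L = ∑ i, (if a i < θ then μ i else 0)}
      ((∑ i, μ i) - V) := by
  obtain ⟨⟨S, hScard, hSV⟩, hub⟩ := hV
  constructor
  · -- membership: allocation θ on S, 0 elsewhere
    refine ⟨fun i => if i ∈ S then θ else 0, ?_, ?_, ?_⟩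
    · intro i
      by_cases h : i ∈ S <;> simp [h, hθ0.le, hθ1]
    · have : (∑ i, (if i ∈ S then θ else 0)) = S.card * θ := by
        rw [Finset.sum_ite_mem, Finset.univ_inter, Finset.sum_const, nsmul_eq_mul]
      rw [this]
      have hcard : (S.card : ℝ) ≤ Q / θ := by
        have h1 : S.card ≤ ⌊Q / θ⌋₊ := le_trans hScard (hM ▸ min_le_left _ _)
        calc (S.card : ℝ) ≤ (⌊Q / θ⌋₊ : ℝ) := by exact_mod_cast h1
          _ ≤ Q / θ := Nat.floor_le (div_nonneg (hθ0.le.trans hQ) hθ0.le)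
      calc (S.card : ℝ) * θ ≤ (Q / θ) * θ := by nlinarith
        _ = Q := by field_simp
    · have key : ∀ i, (if (if i ∈ S then θ else 0) < θ then μ i else 0)
          = (if i ∈ S then 0 else μ i) := by
        intro i
        by_cases h : i ∈ S <;> simp [h, hθ0, lt_irrefl]
      rw [Finset.sum_congr rfl (fun i _ => key i)]
      rw [Finset.sum_ite, Finset.sum_const, smul_zero, zero_add]
      have : ∑ i ∈ Finset.univ.filter (fun i => i ∉ S), μ i
          = (∑ i, μ i) - ∑ i ∈ S, μ i := by
        rw [eq_sub_iff_add_eq]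
        rw [← Finset.sum_filter_add_sum_filter_not Finset.univ (fun i => i ∈ S) μ]
        rw [Finset.filter_mem_eq_inter, Finset.univ_inter]
        ring
      rw [this, hSV]
  · rintro L ⟨a, ha01, haQ, rfl⟩
    set T : Finset (Fin K) := Finset.univ.filter (fun i => θ ≤ a i) with hT
    have hTcard : T.card ≤ M := by
      have hsum : (T.card : ℝ) * θ ≤ Q := by
        calc (T.card : ℝ) * θ = ∑ _i ∈ T, θ := by
              rw [Finset.sum_const, nsmul_eq_mul]
          _ ≤ ∑ i ∈ T, a i := Finset.sum_le_sum (fun i hi => (Finset.mem_filter.mp hi).2)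
          _ ≤ ∑ i, a i := Finset.sum_le_sum_of_subset_of_nonneg (Finset.subset_univ _)
              (fun i _ _ => (ha01 i).1)
          _ ≤ Q := haQ
      have h1 : (T.card : ℝ) ≤ Q / θ := by
        rw [le_div_iff₀ hθ0]; exact hsum
      have h2 : T.card ≤ ⌊Q / θ⌋₊ := Nat.le_floor h1
      rw [hM]
      exact le_min h2 (le_trans (Finset.card_filter_le _ _) (by simp))
    have hTV : ∑ i ∈ T, μ i ≤ V := hub ⟨T, hTcard, rfl⟩
    have key : ∀ i, (if a i < θ then μ i else 0) = (if i ∈ T then 0 else μ i) := by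
      intro i
      by_cases h : θ ≤ a i
      · simp [hT, h, not_lt.mpr h]
      · simp [hT, h, lt_of_not_ge h]
    rw [Finset.sum_congr rfl (fun i _ => key i)]
    rw [Finset.sum_ite, Finset.sum_const, smul_zero, zero_add]
    have : ∑ i ∈ Finset.univ.filter (fun i => i ∉ T), μ i
        = (∑ i, μ i) - ∑ i ∈ T, μ i := by
      rw [eq_sub_iff_add_eq]
      rw [← Finset.sum_filter_add_sum_filter_not Finset.univ (fun i => i ∈ T) μ]
      rw [Finset.filter_mem_eq_inter, Finset.univ_inter]
      ring
    rw [this]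
    linarith
end

section
/- Let μ, θ : Fin K → ℝ with 0 < θ_i ≤ 1 and μ_i ≥ 0 for all i, and let Q ≥ 0. Then the minimum over feasible allocations a ∈ [0,1]^K with ∑ a_i ≤ Q of ∑_i μ_i · 1[a_i < θ_i] equals (∑_i μ_i) − max{ ∑_{i∈S} μ_i : S ⊆ Fin K, ∑_{i∈S} θ_i ≤ Q }. In words, the optimal censored-semi-bandit allocation problem with arm-dependent thresholds is equivalent to a 0-1 knapsack problem with weights θ_i, values μ_i, and capacity Q. -/
open Finset in
theorem stmt_4 (K : ℕ) (μ θ : Fin K → ℝ) (hμ : ∀ i, 0 ≤ μ i)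
    (hθ0 : ∀ i, 0 < θ i) (hθ1 : ∀ i, θ i ≤ 1) (Q : ℝ) (hQ : 0 ≤ Q) (V : ℝ)
    (hV : IsGreatest {v : ℝ | ∃ S : Finset (Fin K), (∑ i ∈ S, θ i) ≤ Q ∧ v = ∑ i ∈ S, μ i} V) :
    IsLeast {L : ℝ | ∃ a : Fin K → ℝ, (∀ i, a i ∈ Set.Icc (0:ℝ) 1) ∧
        (∑ i, a i) ≤ Q ∧ L = ∑ i, (if a i < θ i then μ i else 0)}
      ((∑ i, μ i) - V) := by
  obtain ⟨⟨S, hSQ, hSV⟩, hub⟩ := hV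
  have split : ∀ T : Finset (Fin K),
      ∑ i, (if i ∈ T then (0:ℝ) else μ i) = ∑ i, μ i - ∑ i ∈ T, μ i := by
    intro T
    have h4 : ∑ i, (if i ∈ T then μ i else 0) = ∑ i ∈ T, μ i := by
      rw [Finset.sum_ite_mem, Finset.univ_inter]
    have h5 : ∑ i, ((if i ∈ T then (0:ℝ) else μ i) + (if i ∈ T then μ i else 0))
        = ∑ i, μ i := by
      apply Finset.sum_congr rfl; intro i _; by_cases h : i ∈ T <;> simp [h]
    rw [Finset.sum_add_distrib, h4] at h5
    linarith
  constructor
  · refine ⟨fun i => if i ∈ S then θ i else 0, ?_, ?_, ?_⟩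
    · intro i
      by_cases h : i ∈ S <;> simp [h, (hθ0 i).le, hθ1 i, le_refl]
    · calc ∑ i, (if i ∈ S then θ i else 0) = ∑ i ∈ S, θ i := by
            rw [Finset.sum_ite_mem, Finset.univ_inter]
        _ ≤ Q := hSQ
    · have : ∀ i, (if (if i ∈ S then θ i else 0) < θ i then μ i else 0)
          = (if i ∈ S then 0 else μ i) := by
        intro i
        by_cases h : i ∈ S <;> simp [h, hθ0 i]
      rw [Finset.sum_congr rfl fun i _ => this i, split S, hSV]
  · rintro L ⟨a, ha, haQ, rfl⟩
    set T : Finset (Fin K) := Finset.univ.filter (fun i => θ i ≤ a i) with hT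
    have h1 : ∑ i ∈ T, θ i ≤ Q := by
      calc ∑ i ∈ T, θ i ≤ ∑ i ∈ T, a i := Finset.sum_le_sum fun i hi => by
            simpa [hT] using hi
        _ ≤ ∑ i, a i := Finset.sum_le_sum_of_subset_of_nonneg (Finset.subset_univ T)
            (fun i _ _ => (ha i).1)
        _ ≤ Q := haQ
    have h2 : ∑ i ∈ T, μ i ≤ V := hub ⟨T, h1, rfl⟩
    have h3 : ∀ i, (if a i < θ i then μ i else 0) = (if i ∈ T then 0 else μ i) := by
      intro i
      by_cases h : θ i ≤ a i <;> simp [hT, h, not_lt.mpr, lt_of_not_ge]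
    rw [Finset.sum_congr rfl fun i _ => h3 i, split T]
    linarith
end

section
/- Let μ, θ : Fin K → ℝ with μ_i ≥ 0 and θ_i > 0 for all i, Q ≥ 0, and let S* be an optimal knapsack solution for KP(μ, θ, Q). Define the residual r = Q − ∑_{i∈S*} θ_i and γ = r/K, and assume γ > 0. If θ̂ : Fin K → ℝ satisfies θ_i ≤ θ̂_i ≤ θ_i + γ for all i, then the knapsack problems KP(μ, θ, Q) and KP(μ, θ̂, Q) have the same optimal value (and S* is optimal for both). -/
open Finset in
theorem stmt_7 (K : ℕ) (μ θ θhat : Fin K → ℝ) (hμ : ∀ i, 0 ≤ μ i)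
    (hθ : ∀ i, 0 < θ i) (Q : ℝ) (hQ : 0 ≤ Q)
    (Sstar : Finset (Fin K)) (hfeas : (∑ i ∈ Sstar, θ i) ≤ Q)
    (hopt : ∀ S : Finset (Fin K), (∑ i ∈ S, θ i) ≤ Q → (∑ i ∈ S, μ i) ≤ ∑ i ∈ Sstar, μ i)
    (r γ : ℝ) (hr : r = Q - ∑ i ∈ Sstar, θ i) (hγdef : γ = r / K) (hγ : 0 < γ)
    (hhat : ∀ i, θ i ≤ θhat i ∧ θhat i ≤ θ i + γ) :
    IsGreatest {v : ℝ | ∃ S : Finset (Fin K), (∑ i ∈ S, θhat i) ≤ Q ∧ v = ∑ i ∈ S, μ i}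
      (∑ i ∈ Sstar, μ i) ∧
    IsGreatest {v : ℝ | ∃ S : Finset (Fin K), (∑ i ∈ S, θ i) ≤ Q ∧ v = ∑ i ∈ S, μ i}
      (∑ i ∈ Sstar, μ i) := by
  have hK : 0 < (K : ℝ) := by
    rcases Nat.eq_zero_or_pos K with h | h
    · subst h; simp [hγdef] at hγ
    · exact_mod_cast h
  have hKγ : (K : ℝ) * γ = r := by
    rw [hγdef]; field_simp
  have hfeashat : (∑ i ∈ Sstar, θhat i) ≤ Q := by
    calc ∑ i ∈ Sstar, θhat i ≤ ∑ i ∈ Sstar, (θ i + γ) :=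
          Finset.sum_le_sum fun i _ => (hhat i).2
      _ = (∑ i ∈ Sstar, θ i) + Sstar.card * γ := by
          rw [Finset.sum_add_distrib, Finset.sum_const, nsmul_eq_mul]
      _ ≤ (∑ i ∈ Sstar, θ i) + K * γ := by
          have : (Sstar.card : ℝ) ≤ K := by
            exact_mod_cast (Sstar.card_le_univ.trans_eq (by simp))
          nlinarith
      _ = Q := by rw [hKγ]; linarith [hr]
  constructor
  · constructor
    · exact ⟨Sstar, hfeashat, rfl⟩
    · rintro v ⟨S, hS, rfl⟩
      exact hopt S (le_trans (Finset.sum_le_sum fun i _ => (hhat i).1) hS)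
  · constructor
    · exact ⟨Sstar, hfeas, rfl⟩
    · rintro v ⟨S, hS, rfl⟩
      exact hopt S hS
end
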